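/- For any formula φ ∈ Φ and any two distinct agents a, b ∈ 𝒜, the formula S_b C_a φ is semantically equivalent to ⊥: ⟦S_b C_a φ⟧ = ∅ in every extensive form game. -/
import Mathlib


/-- An extensive form game: a nonempty finite rooted tree. Nodes are represented as
positions, i.e. lists of child indices with the *head* being the most recent step,
so the root is `[]` and the parent of `i :: t` is `t`. Each node carries an agent
label (meaningful on non-leaf nodes) and a set of propositional variables
(meaningful on leaf nodes, the outcomes). -/
structure Game (Agent PropVar : Type) where
  Node : Set (List ℕ)
  root_mem : [] ∈ Node
  downward : ∀ (i : ℕ) (t : List ℕ), i :: t ∈ Node → t ∈ Node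
  finite : Node.Finite
  label : List ℕ → Agent
  leafLabel : List ℕ → Set PropVar

namespace Game

variable {Agent PropVar : Type}

/-- A leaf node (outcome) of the game. -/
def IsOutcome (G : Game Agent PropVar) (w : List ℕ) : Prop :=
  w ∈ G.Node ∧ ∀ i : ℕ, i :: w ∉ G.Node

/-- The set `Ω(G)` of outcomes (leaf nodes) of the game. -/
def outcomes (G : Game Agent PropVar) : Set (List ℕ) := {w | G.IsOutcome w}

/-- `w ⪯ n`: node `n` lies on the simple path (including endpoints) from the root
to `w`; in the position representation this means `n` is a suffix of `w`. -/
def below (w n : List ℕ) : Prop := n <:+ w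

/-- A non-root node `n` is an `X`-achievement point by agent `a` if (1) its parent is
labelled with `a`, (2) some outcome `w ⪯ parent(n)` is not in `X`, and (3) every
outcome `w ⪯ n` is in `X`. -/
def AchievePoint (G : Game Agent PropVar) (X : Set (List ℕ)) (a : Agent) (n : List ℕ) : Prop :=
  ∃ (i : ℕ) (t : List ℕ), n = i :: t ∧ n ∈ G.Node ∧ G.label t = a ∧
    (∃ w ∈ G.outcomes, t <:+ w ∧ w ∉ X) ∧
    (∀ w ∈ G.outcomes, n <:+ w → w ∈ X)

/-- `win_a(X)`: the minimal set of nodes containing `X`, containing every non-leaf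
node labelled `a` with at least one child in the set, and containing every non-leaf
node not labelled `a` all of whose children are in the set. -/
inductive Win (G : Game Agent PropVar) (a : Agent) (X : Set (List ℕ)) : List ℕ → Prop
  | mem (w : List ℕ) (hw : w ∈ X) : Win G a X w
  | own (n : List ℕ) (hn : n ∈ G.Node) (hl : G.label n = a) (i : ℕ)
      (hi : i :: n ∈ G.Node) (h : Win G a X (i :: n)) : Win G a X n
  | other (n : List ℕ) (hn : n ∈ G.Node) (hl : G.label n ≠ a)
      (hne : ∃ i : ℕ, i :: n ∈ G.Node)
      (h : ∀ i : ℕ, i :: n ∈ G.Node → Win G a X (i :: n)) : Win G a X n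

/-- The semantic counterfactual-responsibility operator on sets of outcomes:
`Cset a X` is the set of outcomes `w ∈ X` such that some node `n` with `w ⪯ n`
belongs to `win_a(Ω(G) ∖ X)`. -/
def Cset (G : Game Agent PropVar) (a : Agent) (X : Set (List ℕ)) : Set (List ℕ) :=
  {w | w ∈ X ∧ ∃ n : List ℕ, n <:+ w ∧ G.Win a (G.outcomes \ X) n}

/-- The semantic seeing-to-it-responsibility operator on sets of outcomes:
`Sset a X` is the set of outcomes `w` such that (a) every node `n` with `w ⪯ n`
belongs to `win_a(X)` and (b) there is an `X`-achievement point `n` by agent `a`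
with `w ⪯ n`. -/
def Sset (G : Game Agent PropVar) (a : Agent) (X : Set (List ℕ)) : Set (List ℕ) :=
  {w | w ∈ G.outcomes ∧ (∀ n : List ℕ, n <:+ w → G.Win a X n) ∧
    ∃ n : List ℕ, G.AchievePoint X a n ∧ n <:+ w}

end Game

/-- The language `Φ`: `φ ::= p | ¬φ | φ∧φ | C_a φ | S_a φ`. -/
inductive Formula (Agent PropVar : Type) where
  | var : PropVar → Formula Agent PropVar
  | neg : Formula Agent PropVar → Formula Agent PropVar
  | and : Formula Agent PropVar → Formula Agent PropVar → Formula Agent PropVar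
  | C : Agent → Formula Agent PropVar → Formula Agent PropVar
  | S : Agent → Formula Agent PropVar → Formula Agent PropVar

namespace Game

variable {Agent PropVar : Type}

/-- The truth set `⟦φ⟧ ⊆ Ω(G)` of a formula. -/
def truth (G : Game Agent PropVar) : Formula Agent PropVar → Set (List ℕ)
  | .var p => {w | w ∈ G.outcomes ∧ p ∈ G.leafLabel w}
  | .neg φ => G.outcomes \ G.truth φ
  | .and φ ψ => G.truth φ ∩ G.truth ψ
  | .C a φ => G.Cset a (G.truth φ)
  | .S a φ => G.Sset a (G.truth φ)

/-- The truth set of the `i`-th order counterfactual gap formula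
`G^c_0(φ) := φ`, `G^c_{i+1}(φ) := G^c_i(φ) ∧ ⋀_{a∈𝒜} ¬C_a G^c_i(φ)`. -/
def gapCIter (G : Game Agent PropVar) (φ : Formula Agent PropVar) : ℕ → Set (List ℕ)
  | 0 => G.truth φ
  | i + 1 => G.gapCIter φ i ∩ ⋂ a : Agent, (G.outcomes \ G.Cset a (G.gapCIter φ i))

/-- The truth set of the `i`-th order combined gap formula
`G^{c,s}_0(φ) := φ`,
`G^{c,s}_{i+1}(φ) := G^{c,s}_i(φ) ∧ ⋀_{a∈𝒜} ¬C_a G^{c,s}_i(φ) ∧ ⋀_{a∈𝒜} ¬S_a G^{c,s}_i(φ)`. -/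
def gapCSIter (G : Game Agent PropVar) (φ : Formula Agent PropVar) : ℕ → Set (List ℕ)
  | 0 => G.truth φ
  | i + 1 => G.gapCSIter φ i ∩ (⋂ a : Agent, (G.outcomes \ G.Cset a (G.gapCSIter φ i)))
      ∩ (⋂ a : Agent, (G.outcomes \ G.Sset a (G.gapCSIter φ i)))

end Game

/-- `φ` contains no occurrence of the modality `C`. -/
def Formula.noC {Agent PropVar : Type} : Formula Agent PropVar → Prop
  | .var _ => True
  | .neg φ => φ.noC
  | .and φ ψ => φ.noC ∧ ψ.noC
  | .C _ _ => False
  | .S _ φ => φ.noC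

/-- `φ` contains no occurrence of the modality `S`. -/
def Formula.noS {Agent PropVar : Type} : Formula Agent PropVar → Prop
  | .var _ => True
  | .neg φ => φ.noS
  | .and φ ψ => φ.noS ∧ ψ.noS
  | .C _ φ => φ.noS
  | .S _ _ => False

namespace Game

variable {Agent PropVar : Type}

lemma truth_subset_outcomes (G : Game Agent PropVar) (φ : Formula Agent PropVar) :
    G.truth φ ⊆ G.outcomes := by
  induction φ with
  | var p => intro w hw; exact hw.1
  | neg φ ih => intro w hw; exact hw.1
  | and φ ψ ihφ ihψ => intro w hw; exact ihφ hw.1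
  | C a φ ih => intro w hw; exact ih hw.1
  | S a φ ih => intro w hw; exact hw.1

lemma win_disjoint {G : Game Agent PropVar} {a b : Agent} (hab : a ≠ b)
    {Y Z : Set (List ℕ)} (hY : Y ⊆ G.outcomes) (hZ : Z ⊆ G.outcomes)
    (hYZ : ∀ x, x ∈ Y → x ∉ Z) :
    ∀ m : List ℕ, G.Win a Y m → G.Win b Z m → False := by
  intro m hA hB
  induction hA with
  | mem w hw =>
    cases hB with
    | mem _ hz => exact hYZ w hw hz
    | own _ hn hl i hi h => exact (hY hw).2 i hi
    | other _ hn hl hne h =>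
      obtain ⟨i, hi⟩ := hne
      exact (hY hw).2 i hi
  | own n hn hl i hi h ih =>
    cases hB with
    | mem _ hz => exact (hZ hz).2 i hi
    | own _ _ hl' j hj h' => exact hab (hl.symm.trans hl')
    | other _ _ _ _ h' => exact ih (h' i hi)
  | other n hn hl hne h ih =>
    cases hB with
    | mem _ hz =>
      obtain ⟨i, hi⟩ := hne
      exact (hZ hz).2 i hi
    | own _ _ hl' j hj h' => exact ih j hj h'
    | other _ _ _ _ h' =>
      obtain ⟨i, hi⟩ := hne
      exact ih i hi (h' i hi)

end Game

theorem SC_empty' {Agent PropVar : Type} (φ : Formula Agent PropVar)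
    (a b : Agent) (hab : a ≠ b) :
    ∀ G : Game Agent PropVar, G.truth (.S b (.C a φ)) = ∅ := by
  intro G
  ext w
  simp only [Set.mem_empty_iff_false, iff_false]
  intro hw
  obtain ⟨hwout, hall, -⟩ := hw
  -- w itself is in Win b X, and being an outcome, w ∈ X
  have hww : G.Win b (G.Cset a (G.truth φ)) w := hall w (List.suffix_refl w)
  have hwX : w ∈ G.Cset a (G.truth φ) := by
    cases hww with
    | mem _ hz => exact hz
    | own _ hn hl i hi h => exact absurd hi (hwout.2 i)
    | other _ hn hl hne h =>
      obtain ⟨i, hi⟩ := hne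
      exact absurd hi (hwout.2 i)
  obtain ⟨-, m, hm, hwin⟩ := hwX
  have hB : G.Win b (G.Cset a (G.truth φ)) m := hall m hm
  refine Game.win_disjoint hab ?_ ?_ ?_ m hwin hB
  · exact fun x hx => hx.1
  · exact fun x hx => G.truth_subset_outcomes φ hx.1
  · intro x hx hx'
    exact hx.2 hx'.1

/-- for distinct agents `a ≠ b`, the formula `S_b C_a φ` is
semantically equivalent to `⊥`. -/
theorem SC_empty {Agent PropVar : Type} (φ : Formula Agent PropVar)
    (a b : Agent) (hab : a ≠ b) :
    ∀ G : Game Agent PropVar, G.truth (.S b (.C a φ)) = ∅ := by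
  intro G
  exact SC_empty' φ a b hab G
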